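/- arXiv:1404.5804 — 3 statements merged into one kernel-verified Lean document; each statement's English description precedes it below -/
import Mathlib

section
/- Let Q be the 2m×2m block-diagonal real matrix with diagonal blocks [[0,-1],[1,0]]. If U ∈ U(2m) satisfies U = -Q · conj(U) · Q, then det(U) = 1; that is, the fixed-point set of the involution μ(U) := -Q·conj(U)·Q on U(2m) is contained in SU(2m). -/
/-!
The hypotheses make `U` symplectic for `Q`: conjugating the fixed-point equation by `Q` gives
`conj U = -Q U Q`, and substituting this into `U Uᴴ = 1` (using `Q² = -1`, `Qᵀ = -Q`) yields
`U Q Uᵀ = Q`. Up to a reordering of the basis (even indices first, odd indices second), `Q` is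
the matrix `J = [[0, -1], [1, 0]]` of `Matrix.symplecticGroup`, whose elements have
determinant one.
-/

/-- The standard `2m × 2m` symplectic matrix `Q`, block-diagonal with `m`
diagonal blocks `[[0,-1],[1,0]]`. -/
def stdSymplectic (m : ℕ) : Matrix (Fin (2 * m)) (Fin (2 * m)) ℂ :=
  Matrix.of fun i j =>
    if (j : ℕ) = (i : ℕ) + 1 ∧ Even (i : ℕ) then -1
    else if (i : ℕ) = (j : ℕ) + 1 ∧ Even (j : ℕ) then 1
    else 0

open Matrix

namespace Matrix

variable {n l R : Type*} [DecidableEq l] [CommRing R]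

theorem transpose_submatrix_J (e : n ≃ l ⊕ l) :
    ((J l R).submatrix e e)ᵀ = -(J l R).submatrix e e := by
  rw [transpose_submatrix, J_transpose]
  rfl

variable [Fintype n] [DecidableEq n] [Fintype l]

theorem submatrix_J_mul_self (e : n ≃ l ⊕ l) :
    (J l R).submatrix e e * (J l R).submatrix e e = -1 := by
  rw [submatrix_mul_equiv, J_squared]
  exact congrArg Neg.neg (submatrix_one_equiv e)

theorem det_eq_one_of_mul_submatrix_J_mul_transpose (e : n ≃ l ⊕ l) {A : Matrix n n R}
    (hA : A * (J l R).submatrix e e * Aᵀ = (J l R).submatrix e e) : A.det = 1 := by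
  have hsymp : A.submatrix e.symm e.symm ∈ symplecticGroup l R := by
    have hJ : J l R = ((J l R).submatrix e e).submatrix e.symm e.symm := by
      simp [submatrix_submatrix]
    rw [SymplecticGroup.mem_iff, hJ, transpose_submatrix, submatrix_mul_equiv,
      submatrix_mul_equiv, hA]
  rw [← SymplecticGroup.det_eq_one hsymp, det_submatrix_equiv_self]

theorem mul_mul_transpose_eq_of_mem_unitaryGroup [StarRing R] {Q U : Matrix n n R}
    (hQQ : Q * Q = -1) (hQt : Qᵀ = -Q) (hU : U ∈ unitaryGroup n R)
    (hfix : U = -(Q * U.map (starRingEnd R) * Q)) : U * Q * Uᵀ = Q := by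
  have hconj : U.map (starRingEnd R) = -(Q * U * Q) := by
    calc U.map (starRingEnd R) = -(Q * Q) * U.map (starRingEnd R) * -(Q * Q) := by simp [hQQ]
      _ = -(Q * U * Q) := by
        conv_rhs => rw [hfix]
        simp only [Matrix.mul_neg, Matrix.neg_mul, neg_neg, Matrix.mul_assoc]
  have hstar : star U = -(Q * Uᵀ * Q) := by
    rw [show star U = (U.map (starRingEnd R))ᵀ from rfl, hconj, transpose_neg, transpose_mul,
      transpose_mul, hQt]
    simp [Matrix.mul_assoc]
  have hsymp_mul : U * Q * Uᵀ * Q = -1 := by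
    rw [← mem_unitaryGroup_iff.mp hU, hstar]
    simp [Matrix.mul_assoc]
  calc U * Q * Uᵀ = -(U * Q * Uᵀ * Q * Q) := by simp [Matrix.mul_assoc, hQQ]
    _ = Q := by rw [hsymp_mul]; simp

end Matrix

def finTwoMulEquivSum (m : ℕ) : Fin (2 * m) ≃ Fin m ⊕ Fin m where
  toFun i := if Even (i : ℕ) then .inl ⟨i / 2, by omega⟩ else .inr ⟨i / 2, by omega⟩
  invFun := Sum.elim (fun k => ⟨2 * k, by omega⟩) (fun k => ⟨2 * k + 1, by omega⟩)
  left_inv i := by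
    by_cases h : Even (i : ℕ) <;> simp only [h, if_true, if_false, Sum.elim_inl, Sum.elim_inr] <;>
      ext <;> simp only [Nat.even_iff] at h ⊢ <;> omega
  right_inv := by
    rintro (k | k) <;> simp [Nat.mul_add_div]

theorem stdSymplectic_eq_submatrix_J (m : ℕ) :
    stdSymplectic m = (J (Fin m) ℂ).submatrix (finTwoMulEquivSum m) (finTwoMulEquivSum m) := by
  ext i j
  simp only [stdSymplectic, finTwoMulEquivSum, J, of_apply, submatrix_apply, Equiv.coe_fn_mk]
  split_ifs <;> simp [Fin.ext_iff, one_apply, Nat.even_iff] at * <;> omega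

/-- If `U ∈ U(2m)` satisfies `U = -Q · conj(U) · Q`, then `det U = 1`:
the fixed-point set of the involution `μ(U) = -Q·conj(U)·Q` is contained
in `SU(2m)`. -/
theorem fixed_of_mu_mem_SU (m : ℕ) (U : Matrix (Fin (2 * m)) (Fin (2 * m)) ℂ)
    (hU : U ∈ Matrix.unitaryGroup (Fin (2 * m)) ℂ)
    (hfix : U = -(stdSymplectic m * U.map (starRingEnd ℂ) * stdSymplectic m)) :
    U.det = 1 := by
  rw [stdSymplectic_eq_submatrix_J] at hfix
  exact det_eq_one_of_mul_submatrix_J_mul_transpose _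
    (mul_mul_transpose_eq_of_mem_unitaryGroup (submatrix_J_mul_self _) (transpose_submatrix_J _)
      hU hfix)
end

section
/- The map w : S³ → U(2) given by w(k₀,k₁,k₂,k₃) = [[k₁+ik₂, ik₃+k₀],[ik₃-k₀, k₁-ik₂]] is unitary for all (k₀,k₁,k₂,k₃) ∈ S³, satisfies w(k₀,-k₁,-k₂,-k₃) = -w(k₀,k₁,k₂,k₃)ᵀ, has det(w) ≡ 1, and at the two fixed points k± = (±1,0,0,0) of the involution τ(k₀,k₁,k₂,k₃) = (k₀,-k₁,-k₂,-k₃) the Pfaffian of the skew-symmetric matrix w(k±) equals ±1. -/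
/-!
Writing `a = k₁ + k₂ i` and `b = k₀ + k₃ i`, the matrix is `w(k) = [[a, b], [-b̄, ā]]`, the standard
parametrization of `SU(2)` by the unit quaternions: `w(k)* w(k) = (|a|² + |b|²) I` and
`det w(k) = |a|² + |b|² = ‖k‖² = 1`. On the fixed axis of `τ` only `b = k₀` survives, so `w(k₀,0,0,0)`
is the skew-symmetric matrix `[[0, k₀], [-k₀, 0]]`, whose Pfaffian is `k₀`.
-/

open Matrix

/-- The map `w : S³ → U(2)`,
`w(k₀,k₁,k₂,k₃) = [[k₁+ik₂, ik₃+k₀],[ik₃-k₀, k₁-ik₂]]`. -/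
noncomputable def wSphere (k₀ k₁ k₂ k₃ : ℝ) : Matrix (Fin 2) (Fin 2) ℂ :=
  !![(k₁ : ℂ) + Complex.I * (k₂ : ℂ), Complex.I * (k₃ : ℂ) + (k₀ : ℂ);
     Complex.I * (k₃ : ℂ) - (k₀ : ℂ), (k₁ : ℂ) - Complex.I * (k₂ : ℂ)]

theorem Matrix.mem_specialUnitaryGroup_fin_two_of {R : Type*} [CommRing R] [StarRing R] {a b : R}
    (h : star a * a + star b * b = 1) :
    !![a, b; -star b, star a] ∈ specialUnitaryGroup (Fin 2) R := by
  refine mem_specialUnitaryGroup_iff.2 ⟨mem_unitaryGroup_iff'.2 ?_, ?_⟩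
  · ext i j
    fin_cases i <;> fin_cases j <;> simp [mul_apply] <;> grind
  · rw [det_fin_two_of]
    linear_combination h

open Complex in
theorem wSphere_eq (k₀ k₁ k₂ k₃ : ℝ) :
    wSphere k₀ k₁ k₂ k₃ = !![k₁ + k₂ * I, k₀ + k₃ * I; -star (k₀ + k₃ * I), star (k₁ + k₂ * I)] := by
  ext i j; fin_cases i <;> fin_cases j <;> simp [wSphere] <;> ring

theorem wSphere_mem_specialUnitaryGroup {k₀ k₁ k₂ k₃ : ℝ}
    (hk : k₀ ^ 2 + k₁ ^ 2 + k₂ ^ 2 + k₃ ^ 2 = 1) :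
    wSphere k₀ k₁ k₂ k₃ ∈ specialUnitaryGroup (Fin 2) ℂ := by
  rw [wSphere_eq]
  apply mem_specialUnitaryGroup_fin_two_of
  simp only [Complex.star_def, ← Complex.normSq_eq_conj_mul_self, Complex.normSq_add_mul_I]
  exact_mod_cast by linear_combination hk

theorem wSphere_neg (k₀ k₁ k₂ k₃ : ℝ) :
    wSphere k₀ (-k₁) (-k₂) (-k₃) = -(wSphere k₀ k₁ k₂ k₃)ᵀ := by
  ext i j; fin_cases i <;> fin_cases j <;> simp [wSphere] <;> ring

theorem wSphere_fixedPoint (s : ℝ) : wSphere s 0 0 0 = !![0, (s : ℂ); -s, 0] := by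
  ext i j; fin_cases i <;> fin_cases j <;> simp [wSphere]

theorem Matrix.transpose_fin_two_skew {α : Type*} [Ring α] (a : α) :
    !![0, a; -a, 0]ᵀ = -!![0, a; -a, 0] := by
  ext i j; fin_cases i <;> fin_cases j <;> simp

/-- For `(k₀,k₁,k₂,k₃) ∈ S³`: `w(k)` is unitary, `w` satisfies the
equivariance `w(k₀,-k₁,-k₂,-k₃) = -w(k₀,k₁,k₂,k₃)ᵀ`, `det (w k) = 1`; and at
the fixed points `(±1,0,0,0)` of the involution the Pfaffian of the
skew-symmetric matrix `w(k±)` (its `(0,1)` entry) equals `±1`. -/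
theorem wSphere_properties :
    (∀ k₀ k₁ k₂ k₃ : ℝ, k₀ ^ 2 + k₁ ^ 2 + k₂ ^ 2 + k₃ ^ 2 = 1 →
      wSphere k₀ k₁ k₂ k₃ ∈ Matrix.unitaryGroup (Fin 2) ℂ ∧
      wSphere k₀ (-k₁) (-k₂) (-k₃) = -(wSphere k₀ k₁ k₂ k₃)ᵀ ∧
      (wSphere k₀ k₁ k₂ k₃).det = 1) ∧
    (wSphere 1 0 0 0)ᵀ = -(wSphere 1 0 0 0) ∧
    (wSphere (-1) 0 0 0)ᵀ = -(wSphere (-1) 0 0 0) ∧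
    (wSphere 1 0 0 0) 0 1 = 1 ∧
    (wSphere (-1) 0 0 0) 0 1 = -1 := by
  refine ⟨fun k₀ k₁ k₂ k₃ hk => ?_, ?_, ?_, ?_, ?_⟩
  · obtain ⟨hunitary, hdet⟩ := wSphere_mem_specialUnitaryGroup hk
    exact ⟨hunitary, wSphere_neg k₀ k₁ k₂ k₃, hdet⟩
  · rw [wSphere_fixedPoint, transpose_fin_two_skew]
  · rw [wSphere_fixedPoint, transpose_fin_two_skew]
  · simp [wSphere]
  · simp [wSphere]
end

section
/- The maps k₀, k₁, k₂ : [-π,π]² → ℝ defined by k₀ = (7 + cosθ₁ + cosθ₂ - 9cosθ₁cosθ₂)/D, k₁ = 4sinθ₁(1-cosθ₂)/D, k₂ = 4sinθ₂(1-cosθ₁)/D, where D = 9 - cosθ₁ - cosθ₂ - 7cosθ₁cosθ₂, satisfy: D > 0 for (θ₁,θ₂) ≠ (0,0); k₀² + k₁² + k₂² = 1 wherever defined; k₀(-θ₁,-θ₂) = k₀(θ₁,θ₂) and k_j(-θ₁,-θ₂) = -k_j(θ₁,θ₂) for j = 1,2; and (k₀,k₁,k₂) equals (+1,0,0) at (0,π),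 (π,0), and (-1,0,0) at (π,π). -/
open Real

/-- The common denominator `D(θ₁,θ₂) = 9 - cosθ₁ - cosθ₂ - 7·cosθ₁·cosθ₂`. -/
noncomputable def Dden (θ₁ θ₂ : ℝ) : ℝ :=
  9 - Real.cos θ₁ - Real.cos θ₂ - 7 * Real.cos θ₁ * Real.cos θ₂

/-- `k₀ = (7 + cosθ₁ + cosθ₂ - 9·cosθ₁·cosθ₂)/D`. -/
noncomputable def kZero (θ₁ θ₂ : ℝ) : ℝ :=
  (7 + Real.cos θ₁ + Real.cos θ₂ - 9 * Real.cos θ₁ * Real.cos θ₂) / Dden θ₁ θ₂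

/-- `k₁ = 4·sinθ₁·(1-cosθ₂)/D`. -/
noncomputable def kOne (θ₁ θ₂ : ℝ) : ℝ :=
  4 * Real.sin θ₁ * (1 - Real.cos θ₂) / Dden θ₁ θ₂

/-- `k₂ = 4·sinθ₂·(1-cosθ₁)/D`. -/
noncomputable def kTwo (θ₁ θ₂ : ℝ) : ℝ :=
  4 * Real.sin θ₂ * (1 - Real.cos θ₁) / Dden θ₁ θ₂

/-!
Writing `a = cos θ₁`, `b = cos θ₂`, the denominator is `D = 7(1 - ab) + (1 - a) + (1 - b)`,
a sum of nonnegative terms that vanishes only when `a = b = 1`. The sphere identity is the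
polynomial identity `(7 + a + b - 9ab)² + 16(1 - a²)(1 - b)² + 16(1 - b²)(1 - a)² = D²`,
after substituting `sin² = 1 - cos²`.
-/

theorem Real.cos_lt_one_of_ne_zero {θ : ℝ} (h₁ : -(2 * π) < θ) (h₂ : θ < 2 * π) (hθ : θ ≠ 0) :
    cos θ < 1 :=
  (cos_le_one θ).lt_of_ne fun h => hθ ((cos_eq_one_iff_of_lt_of_lt h₁ h₂).mp h)

theorem Dden_eq_add (θ₁ θ₂ : ℝ) :
    Dden θ₁ θ₂ = 7 * (1 - cos θ₁ * cos θ₂) + (1 - cos θ₁) + (1 - cos θ₂) := by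
  unfold Dden
  ring

theorem Dden_pos_of_cos_lt_one {θ₁ θ₂ : ℝ} (h : cos θ₁ < 1 ∨ cos θ₂ < 1) : 0 < Dden θ₁ θ₂ := by
  have hprod : cos θ₁ * cos θ₂ ≤ 1 := by
    have h₁ := mul_nonneg (sub_nonneg.2 (cos_le_one θ₁))
      (neg_le_iff_add_nonneg.1 (neg_one_le_cos θ₂))
    have h₂ := mul_nonneg (neg_le_iff_add_nonneg.1 (neg_one_le_cos θ₁))
      (sub_nonneg.2 (cos_le_one θ₂))
    linarith
  rw [Dden_eq_add]
  rcases h with h | h <;> linarith [cos_le_one θ₁, cos_le_one θ₂]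

theorem Dden_pos_of_mem_Icc {θ₁ θ₂ : ℝ} (h₁ : θ₁ ∈ Set.Icc (-π) π) (h₂ : θ₂ ∈ Set.Icc (-π) π)
    (hne : ¬(θ₁ = 0 ∧ θ₂ = 0)) : 0 < Dden θ₁ θ₂ := by
  have hpi := pi_pos
  apply Dden_pos_of_cos_lt_one
  rcases not_and_or.mp hne with h | h
  · exact .inl (cos_lt_one_of_ne_zero (by linarith [h₁.1]) (by linarith [h₁.2]) h)
  · exact .inr (cos_lt_one_of_ne_zero (by linarith [h₂.1]) (by linarith [h₂.2]) h)

theorem sphere_polynomial_identity {R : Type*} [CommRing R] (a b : R) :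
    (7 + a + b - 9 * a * b) ^ 2 + 16 * (1 - a ^ 2) * (1 - b) ^ 2 + 16 * (1 - b ^ 2) * (1 - a) ^ 2 =
      (9 - a - b - 7 * a * b) ^ 2 := by
  ring

theorem kZero_sq_add_kOne_sq_add_kTwo_sq {θ₁ θ₂ : ℝ} (hD : Dden θ₁ θ₂ ≠ 0) :
    kZero θ₁ θ₂ ^ 2 + kOne θ₁ θ₂ ^ 2 + kTwo θ₁ θ₂ ^ 2 = 1 := by
  unfold kZero kOne kTwo
  rw [div_pow, div_pow, div_pow, ← add_div, ← add_div, div_eq_one_iff_eq (pow_ne_zero 2 hD)]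
  unfold Dden
  rw [← sphere_polynomial_identity, ← sin_sq, ← sin_sq]
  ring

theorem Dden_neg (θ₁ θ₂ : ℝ) : Dden (-θ₁) (-θ₂) = Dden θ₁ θ₂ := by
  simp only [Dden, cos_neg]

theorem kZero_neg (θ₁ θ₂ : ℝ) : kZero (-θ₁) (-θ₂) = kZero θ₁ θ₂ := by
  simp only [kZero, Dden_neg, cos_neg]

theorem kOne_neg (θ₁ θ₂ : ℝ) : kOne (-θ₁) (-θ₂) = -kOne θ₁ θ₂ := by
  simp only [kOne, Dden_neg, cos_neg, sin_neg]
  ring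

theorem kTwo_neg (θ₁ θ₂ : ℝ) : kTwo (-θ₁) (-θ₂) = -kTwo θ₁ θ₂ := by
  simp only [kTwo, Dden_neg, cos_neg, sin_neg]
  ring

/-- Properties of the equivariant map `𝕋² → S²`: the denominator `D` is
positive away from the origin; `(k₀,k₁,k₂)` lands on the unit sphere wherever
defined; the maps are equivariant under negation of the angles; and they take
the values `(+1,0,0)` at `(0,π)` and `(π,0)`, and `(-1,0,0)` at `(π,π)`. -/
theorem torus_to_sphere_map_properties :
    (∀ θ₁ ∈ Set.Icc (-π) π, ∀ θ₂ ∈ Set.Icc (-π) π,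
      ¬(θ₁ = 0 ∧ θ₂ = 0) → 0 < Dden θ₁ θ₂) ∧
    (∀ θ₁ θ₂ : ℝ, Dden θ₁ θ₂ ≠ 0 →
      kZero θ₁ θ₂ ^ 2 + kOne θ₁ θ₂ ^ 2 + kTwo θ₁ θ₂ ^ 2 = 1) ∧
    (∀ θ₁ θ₂ : ℝ,
      kZero (-θ₁) (-θ₂) = kZero θ₁ θ₂ ∧
      kOne (-θ₁) (-θ₂) = -kOne θ₁ θ₂ ∧
      kTwo (-θ₁) (-θ₂) = -kTwo θ₁ θ₂) ∧
    (kZero 0 π = 1 ∧ kOne 0 π = 0 ∧ kTwo 0 π = 0) ∧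
    (kZero π 0 = 1 ∧ kOne π 0 = 0 ∧ kTwo π 0 = 0) ∧
    (kZero π π = -1 ∧ kOne π π = 0 ∧ kTwo π π = 0) := by
  refine ⟨fun θ₁ h₁ θ₂ h₂ => Dden_pos_of_mem_Icc h₁ h₂,
    fun _ _ => kZero_sq_add_kOne_sq_add_kTwo_sq,
    fun θ₁ θ₂ => ⟨kZero_neg θ₁ θ₂, kOne_neg θ₁ θ₂, kTwo_neg θ₁ θ₂⟩, ?_, ?_, ?_⟩ <;>
  norm_num [kZero, kOne, kTwo, Dden]
end
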